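/- arXiv:2402.17765 — 9 statements merged into one kernel-verified Lean document; each statement's English description precedes it below -/
import Mathlib

section
/- Let 0 < p < 1/2. For every s > 2 the series Σ_{n=1}^∞ Σ_{w∈{1,2,3}ⁿ} φ^s(C_w) converges; consequently s₀ := inf{ s > 0 : Σ_{n=1}^∞ Σ_{w∈{1,2,3}ⁿ} φ^s(C_w) < ∞ } satisfies s₀ ≤ 2. -/
open Matrix MeasureTheory Filter
open scoped ENNReal

noncomputable section

abbrev E3 : Type := EuclideanSpace ℝ (Fin 3)
abbrev Mat3 : Type := Matrix (Fin 3) (Fin 3) ℝ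

/-- The action of a matrix on Euclidean 3-space. -/
noncomputable def matApply (A : Mat3) (x : E3) : E3 := Matrix.toEuclideanCLM (𝕜 := ℝ) A x

/-- The largest singular value `α₁(A) = ‖A‖` (Euclidean operator norm). -/
noncomputable def sv1 (A : Mat3) : ℝ := ‖Matrix.toEuclideanCLM (𝕜 := ℝ) A‖

/-- The smallest singular value `α₃(A) = ‖A⁻¹‖⁻¹`. -/
noncomputable def sv3 (A : Mat3) : ℝ := (‖Matrix.toEuclideanCLM (𝕜 := ℝ) A⁻¹‖)⁻¹

/-- The middle singular value `α₂(A) = |det A| / (α₁(A) α₃(A))`. -/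
noncomputable def sv2 (A : Mat3) : ℝ := |A.det| / (sv1 A * sv3 A)

/-- Falconer's singular value function `φ^s(A)`. -/
noncomputable def svf (s : ℝ) (A : Mat3) : ℝ :=
  if s ≤ 1 then (sv1 A) ^ s
  else if s ≤ 2 then sv1 A * (sv2 A) ^ (s - 1)
  else if s ≤ 3 then sv1 A * sv2 A * (sv3 A) ^ (s - 2)
  else (sv1 A * sv2 A * sv3 A) ^ (s / 3)

/-- The three matrices `C₁, C₂, C₃` (with 0-based indexing). -/
def Cmat (p : ℝ) : Fin 3 → Mat3 :=
  ![!![1 - 2*p, -p, -p; 0, p, 0; 0, 0, p],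
    !![p, 0, 0; -p, 1 - 2*p, -p; 0, 0, p],
    !![p, 0, 0; 0, p, 0; -p, -p, 1 - 2*p]]

/-- The product `C_w = C_{j₁} ⋯ C_{jₙ}` along a word `w = (j₁, …, jₙ)`. -/
noncomputable def Cword (p : ℝ) {n : ℕ} (w : Fin n → Fin 3) : Mat3 :=
  ((List.ofFn w).map (Cmat p)).prod

/-- standard basis vectors of `E3` -/
noncomputable def eVec (i : Fin 3) : E3 := EuclideanSpace.single i 1

/-- The affine map `G_i(x) = C_i x + 2p·e_i`. -/
noncomputable def Gmap (p : ℝ) (i : Fin 3) (x : E3) : E3 :=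
  matApply (Cmat p i) x + (2 * p) • eVec i

/-- The composition `G_w = G_{j₁} ∘ ⋯ ∘ G_{jₙ}` along a word `w = (j₁, …, jₙ)`. -/
noncomputable def Gword (p : ℝ) {n : ℕ} (w : Fin n → Fin 3) : E3 → E3 :=
  ((List.ofFn w).map (Gmap p)).foldr (· ∘ ·) id

/-- Summability of the double series `Σ_{n=1}^∞ Σ_{w ∈ {1,2,3}ⁿ} φ^s(C_w)`
(all terms are nonnegative, so summability is equivalent to finiteness of the sum). -/
def seriesSummable (p s : ℝ) : Prop :=
  Summable (fun x : Σ n : ℕ, (Fin (n+1) → Fin 3) => svf s (Cword p x.2))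

/-- The affinity dimension `s₀ = inf{s > 0 : Σ_n Σ_w φ^s(C_w) < ∞}`. -/
noncomputable def s0 (p : ℝ) : ℝ := sInf {s : ℝ | 0 < s ∧ seriesSummable p s}

/-- The minimal number of balls of radius `δ` needed to cover `A`. -/
noncomputable def coverNum (A : Set E3) (δ : ℝ) : ℕ :=
  sInf {n : ℕ | ∃ t : Finset E3, t.card = n ∧ A ⊆ ⋃ x ∈ t, Metric.ball x δ}

/-- The upper box-counting dimension `limsup_{δ→0⁺} log N_δ(A) / (−log δ)`. -/
noncomputable def upperBoxDim (A : Set E3) : ℝ :=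
  Filter.limsup (fun δ : ℝ => Real.log (coverNum A δ) / (-Real.log δ))
    (nhdsWithin 0 (Set.Ioi 0))

/-- The vector `(1,1,1)`. -/
noncomputable def onesVec : E3 := (WithLp.equiv 2 (Fin 3 → ℝ)).symm ![1, 1, 1]

/-- Orthogonal projection of `ℝ³` onto the plane `V = {x : x₁ + x₂ + x₃ = 0}`. -/
noncomputable def projV (x : E3) : E3 := x - (((x 0) + (x 1) + (x 2)) / 3) • onesVec

/-- The vector `(a,b,c)` in `E3`. -/
noncomputable def vec3 (a b c : ℝ) : E3 := (WithLp.equiv 2 (Fin 3 → ℝ)).symm ![a, b, c]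

/-- The triangle `T₀ = conv{e₁, e₂, e₃}`. -/
noncomputable def T0set : Set E3 := convexHull ℝ {eVec 0, eVec 1, eVec 2}

/-- The standard tetrahedron `W = conv{0, e₁, e₂, e₃}`. -/
noncomputable def Wset : Set E3 := convexHull ℝ {0, eVec 0, eVec 1, eVec 2}

/-- The triangle `T_ε = conv{(1−2ε,ε,ε), (ε,1−2ε,ε), (ε,ε,1−2ε)}`. -/
noncomputable def Ttri (ε : ℝ) : Set E3 :=
  convexHull ℝ {vec3 (1 - 2*ε) ε ε, vec3 ε (1 - 2*ε) ε, vec3 ε ε (1 - 2*ε)}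

/-!
For `s > 2` the singular value function only sees the determinant and the smallest singular
value: `φ^s(A) = |det A| ‖A⁻¹‖^(3-s)` for `s ≤ 3` and `|det A|^(s/3)` beyond, so
`φ^s(A) ≤ |det A| max(1, ‖A⁻¹‖)` once `|det A| ≤ 1`. Here `|det C_w| = ((1-2p)p²)^n`, and every
`C_i⁻¹` has column sums at most `K = 1/p + 1/(1-2p)`; the column-sum operator norm is
submultiplicative and dominates the Euclidean one up to `√3`, so `‖C_w⁻¹‖ ≤ √3 K^n`. Since
`(1-2p)p² K = p(1-p)`, this gives `φ^s(C_w) ≤ √3 (p(1-p))^n`, and as `3p(1-p) < 1` the `3^n`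
words of length `n` contribute a convergent geometric series.
-/

lemma EuclideanSpace.norm_toLp_le_sqrt_card_mul {n : Type*} [Fintype n] (y : n → ℝ) :
    ‖WithLp.toLp 2 y‖ ≤ √(Fintype.card n) * ‖y‖ := by
  rw [EuclideanSpace.norm_eq, ← Real.sqrt_sq (norm_nonneg y), ← Real.sqrt_mul (by positivity)]
  gcongr
  calc ∑ i, ‖y i‖ ^ 2 ≤ ∑ _i : n, ‖y‖ ^ 2 := by gcongr with i; exact norm_le_pi_norm y i
    _ = _ := by simp

open scoped Matrix.Norms.L2Operator in
lemma norm_toEuclideanCLM_transpose {n : Type*} [Fintype n] [DecidableEq n] (A : Matrix n n ℝ) :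
    ‖toEuclideanCLM (𝕜 := ℝ) Aᵀ‖ = ‖toEuclideanCLM (𝕜 := ℝ) A‖ := by
  simpa [l2_opNorm_toEuclideanCLM] using l2_opNorm_conjTranspose A

section LinftyOp

attribute [local instance] Matrix.linftyOpNormedAddCommGroup Matrix.linftyOpNormedRing

variable {n : Type*} [Fintype n] [DecidableEq n]

lemma linfty_opNorm_le_of_forall_sum_le {A : Matrix n n ℝ} {c : ℝ} (hc : 0 ≤ c)
    (h : ∀ i, ∑ j, |A i j| ≤ c) : ‖A‖ ≤ c := by
  change ‖fun i => WithLp.toLp 1 (A i)‖ ≤ c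
  refine (pi_norm_le_iff_of_nonneg hc).2 fun i => ?_
  simpa [PiLp.norm_eq_of_L1] using h i

lemma norm_toEuclideanCLM_le_sqrt_card_mul (A : Matrix n n ℝ) :
    ‖toEuclideanCLM (𝕜 := ℝ) A‖ ≤ √(Fintype.card n) * ‖A‖ := by
  refine ContinuousLinearMap.opNorm_le_bound _ (by positivity) fun x => ?_
  have hsup : ‖x.ofLp‖ ≤ ‖x‖ :=
    (pi_norm_le_iff_of_nonneg (norm_nonneg x)).2 fun i => PiLp.norm_apply_le x i
  calc ‖toEuclideanCLM (𝕜 := ℝ) A x‖ = ‖WithLp.toLp 2 (A *ᵥ x.ofLp)‖ := by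
        rw [← toEuclideanCLM_toLp, WithLp.toLp_ofLp]
    _ ≤ √(Fintype.card n) * (‖A‖ * ‖x.ofLp‖) :=
        (EuclideanSpace.norm_toLp_le_sqrt_card_mul _).trans
          (by gcongr; exact linfty_opNorm_mulVec A _)
    _ ≤ √(Fintype.card n) * ‖A‖ * ‖x‖ := by rw [mul_assoc]; gcongr

lemma linfty_opNorm_transpose_inv_list_prod_le [Nonempty n] {K : ℝ} (l : List (Matrix n n ℝ))
    (h : ∀ X ∈ l, ‖X⁻¹ᵀ‖ ≤ K) : ‖l.prod⁻¹ᵀ‖ ≤ K ^ l.length := by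
  induction l with
  | nil => simp
  | cons X l ih =>
    have hX := h X List.mem_cons_self
    rw [List.prod_cons, Matrix.mul_inv_rev, Matrix.transpose_mul, List.length_cons, pow_succ']
    exact (norm_mul_le _ _).trans (mul_le_mul hX (ih fun Y hY => h Y (List.mem_cons_of_mem X hY))
      (norm_nonneg _) ((norm_nonneg _).trans hX))

end LinftyOp

lemma Real.rpow_le_max_one_self {x t : ℝ} (hx : 0 ≤ x) (ht0 : 0 ≤ t) (ht1 : t ≤ 1) :
    x ^ t ≤ max 1 x := by
  rcases le_total x 1 with h | h
  · exact (Real.rpow_le_one hx h ht0).trans (le_max_left _ _)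
  · exact (Real.rpow_le_rpow_of_exponent_le h ht1).trans
      (by rw [Real.rpow_one]; exact le_max_right _ _)

lemma sv1_pos {A : Mat3} (hA : A.det ≠ 0) : 0 < sv1 A := by
  refine norm_pos_iff.2 ((map_ne_zero_iff _ (toEuclideanCLM (n := Fin 3) (𝕜 := ℝ)).injective).2 ?_)
  rintro rfl
  simp at hA

lemma sv3_pos {A : Mat3} (hA : A.det ≠ 0) : 0 < sv3 A := by
  refine inv_pos.2 (norm_pos_iff.2
    ((map_ne_zero_iff _ (toEuclideanCLM (n := Fin 3) (𝕜 := ℝ)).injective).2 ?_))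
  intro h
  simpa [h] using A.mul_nonsing_inv (isUnit_iff_ne_zero.2 hA)

lemma sv1_mul_sv2_mul_sv3 {A : Mat3} (hA : A.det ≠ 0) : sv1 A * sv2 A * sv3 A = |A.det| := by
  have := sv1_pos hA
  have := sv3_pos hA
  unfold sv2
  field_simp

lemma svf_nonneg (s : ℝ) (A : Mat3) : 0 ≤ svf s A := by
  have h1 : 0 ≤ sv1 A := norm_nonneg _
  have h3 : 0 ≤ sv3 A := inv_nonneg.2 (norm_nonneg _)
  have h2 : 0 ≤ sv2 A := div_nonneg (abs_nonneg _) (mul_nonneg h1 h3)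
  unfold svf
  split_ifs <;> positivity

lemma svf_le_abs_det_mul_max {s : ℝ} {A : Mat3} (hs : 2 < s) (hA : A.det ≠ 0)
    (hdet : |A.det| ≤ 1) : svf s A ≤ |A.det| * max 1 ‖toEuclideanCLM (𝕜 := ℝ) A⁻¹‖ := by
  have h3 := sv3_pos hA
  have hmax : 1 ≤ max 1 ‖toEuclideanCLM (𝕜 := ℝ) A⁻¹‖ := le_max_left _ _
  unfold svf
  rw [if_neg (by linarith), if_neg (by linarith)]
  split_ifs with hs3
  · have hsv3 : sv3 A ^ (s - 3) = ‖toEuclideanCLM (𝕜 := ℝ) A⁻¹‖ ^ (3 - s) := by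
      rw [sv3, Real.inv_rpow (norm_nonneg _), ← Real.rpow_neg (norm_nonneg _), neg_sub]
    calc sv1 A * sv2 A * sv3 A ^ (s - 2) = sv1 A * sv2 A * sv3 A * sv3 A ^ (s - 3) := by
          rw [show s - 2 = 1 + (s - 3) by ring, Real.rpow_add h3, Real.rpow_one]; ring
      _ = |A.det| * ‖toEuclideanCLM (𝕜 := ℝ) A⁻¹‖ ^ (3 - s) := by
          rw [sv1_mul_sv2_mul_sv3 hA, hsv3]
      _ ≤ _ := by
          gcongr
          exact Real.rpow_le_max_one_self (norm_nonneg _) (by linarith) (by linarith)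
  · rw [sv1_mul_sv2_mul_sv3 hA]
    calc |A.det| ^ (s / 3) ≤ |A.det| ^ (1 : ℝ) :=
          Real.rpow_le_rpow_of_exponent_ge (abs_pos.2 hA) hdet (by linarith)
      _ ≤ _ := by rw [Real.rpow_one]; exact le_mul_of_one_le_right (abs_nonneg _) hmax

lemma summable_sigma_of_le_geometric {α : Type*} [Fintype α]
    {f : (Σ n : ℕ, Fin (n + 1) → α) → ℝ} {C r : ℝ} (hf : ∀ x, 0 ≤ f x)
    (hle : ∀ x, f x ≤ C * r ^ (x.1 + 1)) (hr0 : 0 ≤ r) (hr : Fintype.card α * r < 1) :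
    Summable f := by
  have hg : ∀ x : Σ n : ℕ, Fin (n + 1) → α, 0 ≤ C * r ^ (x.1 + 1) :=
    fun x => (hf x).trans (hle x)
  refine Summable.of_nonneg_of_le hf hle ((summable_sigma_of_nonneg hg).2
    ⟨fun _ => Summable.of_finite, ?_⟩)
  have hfiber : ∀ n : ℕ, ∑' _w : Fin (n + 1) → α, C * r ^ (n + 1)
      = C * (Fintype.card α * r) ^ (n + 1) := fun n => by
    rw [tsum_fintype, Finset.sum_const, Finset.card_univ, Fintype.card_fun, Fintype.card_fin,
      nsmul_eq_mul, mul_pow]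
    push_cast
    ring
  simp only [hfiber]
  exact ((summable_nat_add_iff 1).2
    (summable_geometric_of_lt_one (by positivity) hr)).mul_left C

def Cinv (p : ℝ) : Fin 3 → Mat3 :=
  ![!![1/(1-2*p), 1/(1-2*p), 1/(1-2*p); 0, 1/p, 0; 0, 0, 1/p],
    !![1/p, 0, 0; 1/(1-2*p), 1/(1-2*p), 1/(1-2*p); 0, 0, 1/p],
    !![1/p, 0, 0; 0, 1/p, 0; 1/(1-2*p), 1/(1-2*p), 1/(1-2*p)]]

section Cmat

variable {p : ℝ}

lemma Cmat_mul_Cinv (hp0 : p ≠ 0) (hp1 : 1 - 2 * p ≠ 0) (i : Fin 3) :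
    Cmat p i * Cinv p i = 1 := by
  fin_cases i <;> ext j k <;> fin_cases j <;> fin_cases k <;>
    simp [Cmat, Cinv, Matrix.mul_apply, Fin.sum_univ_three, hp0, hp1]

lemma det_Cmat (i : Fin 3) : (Cmat p i).det = (1 - 2 * p) * p ^ 2 := by
  fin_cases i <;> simp [Cmat, Matrix.det_fin_three] <;> ring

lemma det_Cword {n : ℕ} (w : Fin n → Fin 3) : (Cword p w).det = ((1 - 2 * p) * p ^ 2) ^ n := by
  rw [Cword, ← Matrix.coe_detMonoidHom, map_list_prod]
  simp [Function.comp_def, det_Cmat]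

section LinftyOp

attribute [local instance] Matrix.linftyOpNormedAddCommGroup Matrix.linftyOpNormedRing

-- The row sums of `C_i⁻¹` reach `3/(1-2p)`, too large for the argument: hence the transpose.
lemma linfty_opNorm_transpose_inv_Cmat_le (hp0 : 0 < p) (hp1 : p < 1 / 2) (i : Fin 3) :
    ‖(Cmat p i)⁻¹ᵀ‖ ≤ 1 / p + 1 / (1 - 2 * p) := by
  have hq : 0 < 1 - 2 * p := by linarith
  rw [Matrix.inv_eq_right_inv (Cmat_mul_Cinv hp0.ne' hq.ne' i)]
  refine linfty_opNorm_le_of_forall_sum_le (by positivity) fun j => ?_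
  fin_cases i <;> fin_cases j <;>
    simp [Cinv, Fin.sum_univ_three, abs_of_pos hq, abs_of_pos hp0] <;> linarith

lemma norm_toEuclideanCLM_inv_Cword_le (hp0 : 0 < p) (hp1 : p < 1 / 2) {n : ℕ}
    (w : Fin n → Fin 3) :
    ‖toEuclideanCLM (𝕜 := ℝ) (Cword p w)⁻¹‖ ≤ √3 * (1 / p + 1 / (1 - 2 * p)) ^ n := by
  rw [← norm_toEuclideanCLM_transpose]
  refine (norm_toEuclideanCLM_le_sqrt_card_mul _).trans ?_
  rw [Fintype.card_fin, Nat.cast_ofNat]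
  gcongr
  simpa [Cword] using linfty_opNorm_transpose_inv_list_prod_le ((List.ofFn w).map (Cmat p))
    (by simpa using fun i => linfty_opNorm_transpose_inv_Cmat_le hp0 hp1 (w i))

end LinftyOp

lemma svf_Cword_le (hp0 : 0 < p) (hp1 : p < 1 / 2) {s : ℝ} (hs : 2 < s) {n : ℕ}
    (w : Fin n → Fin 3) : svf s (Cword p w) ≤ √3 * (p * (1 - p)) ^ n := by
  have hq : 0 < 1 - 2 * p := by linarith
  have hd : 0 < (1 - 2 * p) * p ^ 2 := by positivity
  have hdet : |(Cword p w).det| = ((1 - 2 * p) * p ^ 2) ^ n := by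
    rw [det_Cword, abs_of_pos (pow_pos hd n)]
  have hK : 1 ≤ √3 * (1 / p + 1 / (1 - 2 * p)) ^ n := by
    refine one_le_mul_of_one_le_of_one_le (by simp) (one_le_pow₀ ?_)
    have : 2 ≤ 1 / p := by rw [le_div_iff₀ hp0]; linarith
    linarith [one_div_pos.2 hq]
  calc svf s (Cword p w)
      ≤ |(Cword p w).det| * max 1 ‖toEuclideanCLM (𝕜 := ℝ) (Cword p w)⁻¹‖ :=
        svf_le_abs_det_mul_max hs (by rw [det_Cword]; positivity)
          (by rw [hdet]; exact pow_le_one₀ hd.le (by nlinarith))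
    _ ≤ ((1 - 2 * p) * p ^ 2) ^ n * (√3 * (1 / p + 1 / (1 - 2 * p)) ^ n) := by
        rw [hdet]
        gcongr
        exact max_le hK (norm_toEuclideanCLM_inv_Cword_le hp0 hp1 w)
    _ = √3 * (p * (1 - p)) ^ n := by
        rw [mul_left_comm, ← mul_pow]
        congr 2
        field_simp
        ring

end Cmat

/-- Theorem (the series converges for all `s > 2`, hence `s₀ ≤ 2`). -/
theorem series_summable_of_two_lt (p : ℝ) (hp0 : 0 < p) (hp1 : p < 1/2) :
    (∀ s : ℝ, 2 < s → seriesSummable p s) ∧ s0 p ≤ 2 := by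
  have hsum : ∀ s : ℝ, 2 < s → seriesSummable p s := fun s hs =>
    summable_sigma_of_le_geometric (fun _ => svf_nonneg _ _)
      (fun x => svf_Cword_le hp0 hp1 hs x.2) (mul_nonneg hp0.le (by linarith))
      (by rw [Fintype.card_fin, Nat.cast_ofNat]; nlinarith)
  refine ⟨hsum, le_of_forall_gt_imp_ge_of_dense fun t ht => ?_⟩
  exact csInf_le ⟨0, fun _ hx => hx.1.le⟩ ⟨by linarith, hsum t ht⟩
end
end

section
/- For every ε ∈ (0, 1/3) there exists a constant C > 0 such that for every 3×3 real matrix M all of whose entries are nonnegative and every v ∈ T_ε, one has ‖Mv‖ ≥ C‖M‖. -/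
open Matrix MeasureTheory Filter
open scoped ENNReal

noncomputable section

lemma matApply_apply (M : Mat3) (v : E3) (i : Fin 3) :
    matApply M v i = ∑ j, M i j * v j := by
  have h := Matrix.ofLp_toEuclideanCLM (𝕜 := ℝ) M v
  have h2 : matApply M v i = M.mulVec (WithLp.equiv 2 (Fin 3 → ℝ) v) i :=
    congrFun h i
  simpa [Matrix.mulVec, dotProduct] using h2

lemma coord_le_norm (y : E3) (i : Fin 3) : |y i| ≤ ‖y‖ := by
  rw [EuclideanSpace.norm_eq, ← Real.sqrt_sq_eq_abs]
  apply Real.sqrt_le_sqrt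
  have := Finset.single_le_sum (f := fun j => ‖y j‖ ^ 2)
    (fun j _ => sq_nonneg _) (Finset.mem_univ i)
  simpa [Real.norm_eq_abs, sq_abs] using this

lemma norm_le_sum_abs (y : E3) : ‖y‖ ≤ ∑ i, |y i| := by
  rw [EuclideanSpace.norm_eq]
  have h : ∑ i, ‖y i‖ ^ 2 ≤ (∑ i, |y i|) ^ 2 := by
    simpa [Real.norm_eq_abs, sq_abs] using
      Finset.sum_sq_le_sq_sum_of_nonneg (f := fun i : Fin 3 => |y i|)
        (fun i _ => abs_nonneg _)
  calc Real.sqrt (∑ i, ‖y i‖ ^ 2) ≤ Real.sqrt ((∑ i, |y i|) ^ 2) :=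
        Real.sqrt_le_sqrt h
    _ = ∑ i, |y i| := by
        rw [Real.sqrt_sq (Finset.sum_nonneg fun i _ => abs_nonneg _)]

lemma sv1_le_sum_abs (M : Mat3) : sv1 M ≤ ∑ i, ∑ j, |M i j| := by
  apply ContinuousLinearMap.opNorm_le_bound _
    (Finset.sum_nonneg fun i _ => Finset.sum_nonneg fun j _ => abs_nonneg _)
  intro x
  calc ‖Matrix.toEuclideanCLM (𝕜 := ℝ) M x‖ ≤ ∑ i, |matApply M x i| :=
        norm_le_sum_abs _
    _ ≤ ∑ i : Fin 3, ∑ j, |M i j| * ‖x‖ := by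
        apply Finset.sum_le_sum
        intro i _
        rw [matApply_apply]
        calc |∑ j, M i j * x j| ≤ ∑ j, |M i j * x j| :=
              Finset.abs_sum_le_sum_abs _ _
          _ ≤ ∑ j, |M i j| * ‖x‖ := by
              apply Finset.sum_le_sum
              intro j _
              rw [abs_mul]
              exact mul_le_mul_of_nonneg_left (coord_le_norm x j) (abs_nonneg _)
    _ = (∑ i, ∑ j, |M i j|) * ‖x‖ := by rw [Finset.sum_mul]; simp [Finset.sum_mul]

lemma Ttri_coord (ε : ℝ) (hε : ε ∈ Set.Ioo (0 : ℝ) (1/3)) {v : E3}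
    (hv : v ∈ Ttri ε) (j : Fin 3) : ε ≤ v j := by
  obtain ⟨hε0, hε3⟩ := hε
  have hconv : Convex ℝ {x : E3 | ∀ j, ε ≤ x j} := by
    intro x hx y hy a b ha hb hab j
    have hxj := hx j
    have hyj := hy j
    have : (a • x + b • y) j = a * x j + b * y j := rfl
    rw [Set.mem_setOf_eq] at *
    nlinarith [mul_le_mul_of_nonneg_left (hx j) ha,
      mul_le_mul_of_nonneg_left (hy j) hb]
  have hsub : ({vec3 (1 - 2*ε) ε ε, vec3 ε (1 - 2*ε) ε, vec3 ε ε (1 - 2*ε)} :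
      Set E3) ⊆ {x : E3 | ∀ j, ε ≤ x j} := by
    intro x hx j
    rcases hx with h | h | h <;> subst h <;> fin_cases j <;>
      simp [vec3] <;> linarith
  exact convexHull_min hsub hconv hv j

/-- Lemma (vectors in `T_ε` see a definite proportion of the norm of a nonnegative matrix). -/
theorem nonneg_matrix_lower_bound_on_Ttri (ε : ℝ) (hε : ε ∈ Set.Ioo (0 : ℝ) (1/3)) :
    ∃ C : ℝ, 0 < C ∧ ∀ M : Mat3, (∀ i j, 0 ≤ M i j) → ∀ v ∈ Ttri ε,
      C * sv1 M ≤ ‖matApply M v‖ := by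
  obtain ⟨hε0, hε3⟩ := hε
  refine ⟨ε / 3, by linarith, ?_⟩
  intro M hM v hv
  have hvj : ∀ j, ε ≤ v j := Ttri_coord ε ⟨hε0, hε3⟩ hv
  have h2 : ∀ i, matApply M v i ≤ ‖matApply M v‖ :=
    fun i => (le_abs_self _).trans (coord_le_norm _ i)
  have key : ε * ∑ i, ∑ j, M i j ≤ 3 * ‖matApply M v‖ := by
    calc ε * ∑ i, ∑ j, M i j = ∑ i : Fin 3, ∑ j, M i j * ε := by
          rw [Finset.mul_sum]; simp [Finset.mul_sum, mul_comm]
      _ ≤ ∑ i : Fin 3, matApply M v i := by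
          apply Finset.sum_le_sum
          intro i _
          rw [matApply_apply]
          exact Finset.sum_le_sum fun j _ =>
            mul_le_mul_of_nonneg_left (hvj j) (hM i j)
      _ ≤ ∑ _i : Fin 3, ‖matApply M v‖ := Finset.sum_le_sum fun i _ => h2 i
      _ = 3 * ‖matApply M v‖ := by simp
  have hsv : sv1 M ≤ ∑ i, ∑ j, M i j := by
    have := sv1_le_sum_abs M
    have heq : ∀ i j, |M i j| = M i j := fun i j => abs_of_nonneg (hM i j)
    simpa [heq] using this
  have hsv0 : 0 ≤ sv1 M := norm_nonneg _
  nlinarith [mul_le_mul_of_nonneg_left hsv (le_of_lt hε0)]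
end
end

section
/- There exists a constant C > 0 such that for every invertible 3×3 real matrix B all of whose inverse's entries are nonnegative, the 2-dimensional Hausdorff measure (area) of proj(B(T₀)) satisfies Area(proj(B(T₀))) ≥ C · α₁(B) · α₂(B), where B(T₀) = {Bx : x ∈ T₀}. -/
open Matrix MeasureTheory Filter
open scoped ENNReal

noncomputable section

/-!
The linear map `ψ x = ((x₁ - x₂)/2, (x₂ - x₃)/2)` (`planeCoord`) kills `(1,1,1)`, so
`ψ ∘ proj = ψ`, and it is 1-Lipschitz into `Fin 2 → ℝ` with the sup norm, where `μH[2]` is Lebesgue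
measure. Hence the area of `proj (B T₀)` is at least the Lebesgue measure of the triangle
`ψ (B T₀)`. The planar cross product of `ψ p` and `ψ q` is `(1,1,1) · (p × q) / 4`, and
`B(e₂ - e₁) × B(e₃ - e₁) = cof(B) (1,1,1)`, so the edge determinant of that triangle is
`det B · Σᵢⱼ (B⁻¹)ᵢⱼ / 4`. When `B⁻¹ ≥ 0` this sum of entries bounds `‖B⁻¹‖ = α₃(B)⁻¹` from above,
and `α₁ α₂ = |det B| / α₃`.
-/

lemma Matrix.norm_toEuclideanCLM_le_sum_abs {n : Type*} [Fintype n] [DecidableEq n]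
    (M : Matrix n n ℝ) : ‖Matrix.toEuclideanCLM (𝕜 := ℝ) M‖ ≤ ∑ i, ∑ j, |M i j| := by
  have norm_single_le (i j : n) (c : ℝ) :
      ‖Matrix.toEuclideanCLM (𝕜 := ℝ) (Matrix.single i j c)‖ ≤ |c| := by
    refine ContinuousLinearMap.opNorm_le_bound _ (abs_nonneg c) fun x => ?_
    rw [← WithLp.toLp_ofLp 2 x, Matrix.toEuclideanCLM_toLp, Matrix.single_mulVec_eq,
      WithLp.toLp_smul, norm_smul, PiLp.toLp_single, PiLp.norm_single, norm_one, mul_one,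
      norm_mul, Real.norm_eq_abs, WithLp.toLp_ofLp]
    gcongr
    exact PiLp.norm_apply_le x j
  conv_lhs => rw [M.matrix_eq_sum_single]
  rw [map_sum]
  refine (norm_sum_le _ _).trans (Finset.sum_le_sum fun i _ => ?_)
  rw [map_sum]
  exact (norm_sum_le _ _).trans (Finset.sum_le_sum fun j _ => norm_single_le i j _)

lemma Matrix.sum_adjugate_eq_det_mul_sum_inv {n R : Type*} [Fintype n] [DecidableEq n]
    [CommRing R] {A : Matrix n n R} (hA : IsUnit A.det) :
    ∑ i, ∑ j, A.adjugate i j = A.det * ∑ i, ∑ j, A⁻¹ i j := by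
  have hadj : A.adjugate = A.det • A⁻¹ := by
    rw [Matrix.inv_def, smul_smul, Ring.mul_inverse_cancel _ hA, one_smul]
  simp_rw [hadj, Matrix.smul_apply, smul_eq_mul, Finset.mul_sum]

/-- The triangle contains the image of the square `[0, 1/2]²` under its edge matrix. -/
lemma ofReal_abs_det_div_four_le_volume_convexHull (a b c : Fin 2 → ℝ) :
    ENNReal.ofReal (|(Matrix.of ![b - a, c - a]).det| / 4) ≤ volume (convexHull ℝ {a, b, c}) := by
  set M : Matrix (Fin 2) (Fin 2) ℝ := Matrix.of ![b - a, c - a]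
  have hsub : (a + ·) '' (Matrix.toLin' Mᵀ '' Set.Icc 0 (fun _ => 1 / 2)) ⊆
      convexHull ℝ {a, b, c} := by
    rintro _ ⟨_, ⟨y, ⟨hy0, hy1⟩, rfl⟩, rfl⟩
    have hcomb : a + Matrix.toLin' Mᵀ y = ∑ i, ![1 - y 0 - y 1, y 0, y 1] i • ![a, b, c] i := by
      rw [Matrix.toLin'_apply, Matrix.mulVec_transpose, Matrix.vecMul_eq_sum, Fin.sum_univ_two,
        Fin.sum_univ_three]
      change a + (y 0 • (b - a) + y 1 • (c - a)) = _
      simp only [Matrix.cons_val]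
      module
    change a + Matrix.toLin' Mᵀ y ∈ _
    rw [hcomb]
    refine (convex_convexHull ℝ _).sum_mem (fun i _ => ?_) ?_ fun i _ => subset_convexHull ℝ _ ?_
    · fin_cases i
      exacts [show 0 ≤ 1 - y 0 - y 1 by linarith [hy1 0, hy1 1], hy0 0, hy0 1]
    · rw [Fin.sum_univ_three]
      simp only [Matrix.cons_val]
      ring
    · fin_cases i <;> simp
  calc ENNReal.ofReal (|M.det| / 4)
      = ENNReal.ofReal |M.det| * volume (Set.Icc (0 : Fin 2 → ℝ) (fun _ => 1 / 2)) := by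
        rw [Real.volume_Icc_pi, Fin.prod_univ_two, ← ENNReal.ofReal_mul (by norm_num),
          ← ENNReal.ofReal_mul (abs_nonneg _)]
        congr 1
        simp only [Pi.zero_apply, sub_zero]
        ring
    _ = volume ((a + ·) '' (Matrix.toLin' Mᵀ '' Set.Icc 0 (fun _ => 1 / 2))) := by
        rw [Set.image_add_left, measure_preimage_add, Measure.addHaar_image_linearMap,
          LinearMap.det_toLin', Matrix.det_transpose]
    _ ≤ volume (convexHull ℝ {a, b, c}) := measure_mono hsub

lemma sv1_mul_sv2 (A : Mat3) :
    sv1 A * sv2 A = |A.det| * ‖Matrix.toEuclideanCLM (𝕜 := ℝ) A⁻¹‖ := by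
  by_cases h : sv1 A = 0
  · have hA : A = 0 := by
      rw [sv1, norm_eq_zero] at h
      exact (Matrix.toEuclideanCLM (𝕜 := ℝ) (n := Fin 3)).injective (h.trans (map_zero _).symm)
    rw [h, hA]
    simp
  · rw [sv2, sv3]
    field_simp

lemma matApply_eVec_apply (A : Mat3) (i k : Fin 3) : matApply A (eVec i) k = A k i := by
  simp [matApply, eVec, Matrix.mulVec, dotProduct]

def planeCoord : E3 →ₗ[ℝ] (Fin 2 → ℝ) where
  toFun x := ![(x 0 - x 1) / 2, (x 1 - x 2) / 2]
  map_add' x y := by ext i; fin_cases i <;> simp [add_sub_add_comm, add_div]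
  map_smul' c x := by ext i; fin_cases i <;> simp [← mul_sub, mul_div_assoc]

lemma planeCoord_apply (x : E3) : planeCoord x = ![(x 0 - x 1) / 2, (x 1 - x 2) / 2] := rfl

lemma norm_planeCoord_le (x : E3) : ‖planeCoord x‖ ≤ ‖x‖ := by
  have hx (i : Fin 3) : |x i| ≤ ‖x‖ := PiLp.norm_apply_le x i
  have half_sub_le (i j : Fin 3) : |(x i - x j) / 2| ≤ ‖x‖ := by
    rw [abs_div, abs_two, div_le_iff₀ two_pos]
    linarith [abs_sub (x i) (x j), hx i, hx j]
  refine (pi_norm_le_iff_of_nonneg (norm_nonneg x)).2 fun i => ?_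
  fin_cases i
  exacts [half_sub_le 0 1, half_sub_le 1 2]

lemma lipschitzWith_planeCoord : LipschitzWith 1 planeCoord :=
  AddMonoidHomClass.lipschitz_of_bound_nnnorm planeCoord 1 fun x => by
    simpa [← NNReal.coe_le_coe] using norm_planeCoord_le x

lemma planeCoord_projV (x : E3) : planeCoord (projV x) = planeCoord x := by
  ext i; fin_cases i <;> simp [planeCoord_apply, projV, onesVec]

lemma planeCoord_image_projV_image_T0set (B : Mat3) :
    planeCoord '' (projV '' (matApply B '' T0set)) =
      convexHull ℝ {planeCoord (matApply B (eVec 0)), planeCoord (matApply B (eVec 1)),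
        planeCoord (matApply B (eVec 2))} := by
  have hcomp : planeCoord ∘ projV ∘ matApply B =
      planeCoord ∘ₗ (Matrix.toEuclideanCLM (𝕜 := ℝ) B : E3 →L[ℝ] E3).toLinearMap := by
    funext x
    exact planeCoord_projV _
  rw [Set.image_image, Set.image_image]
  change (planeCoord ∘ projV ∘ matApply B) '' T0set = _
  rw [hcomp, T0set, LinearMap.image_convexHull, Set.image_insert_eq, Set.image_insert_eq,
    Set.image_singleton]
  rfl

lemma det_planeCoord_triangle (B : Mat3) :
    (Matrix.of ![planeCoord (matApply B (eVec 1)) - planeCoord (matApply B (eVec 0)),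
      planeCoord (matApply B (eVec 2)) - planeCoord (matApply B (eVec 0))]).det =
      (∑ i, ∑ j, B.adjugate i j) / 4 := by
  rw [Matrix.det_fin_two, Matrix.adjugate_fin_three]
  simp only [planeCoord_apply, matApply_eVec_apply, Matrix.of_apply, Matrix.cons_val, Pi.sub_apply,
    Fin.sum_univ_three]
  ring

/-- Lemma (area of the projected triangle is comparable to `α₁ α₂`). -/
theorem area_proj_triangle_lower_bound :
    ∃ C : ℝ, 0 < C ∧ ∀ B : Mat3, IsUnit B → (∀ i j, 0 ≤ B⁻¹ i j) →
      ENNReal.ofReal (C * sv1 B * sv2 B) ≤ μH[2] (projV '' (matApply B '' T0set)) := by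
  refine ⟨1 / 16, by norm_num, fun B hB hBinv => ?_⟩
  set w : Fin 3 → Fin 2 → ℝ := fun i => planeCoord (matApply B (eVec i))
  set S := ∑ i, ∑ j, B⁻¹ i j
  have hdet : (Matrix.of ![w 1 - w 0, w 2 - w 0]).det = B.det * S / 4 := by
    rw [det_planeCoord_triangle,
      Matrix.sum_adjugate_eq_det_mul_sum_inv ((Matrix.isUnit_iff_isUnit_det B).mp hB)]
  have hnorm : ‖Matrix.toEuclideanCLM (𝕜 := ℝ) B⁻¹‖ ≤ S := by
    simpa only [abs_of_nonneg (hBinv _ _)] using Matrix.norm_toEuclideanCLM_le_sum_abs B⁻¹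
  have hμ : (μH[2] : Measure (Fin 2 → ℝ)) = volume := by
    simpa using hausdorffMeasure_pi_real (ι := Fin 2)
  calc ENNReal.ofReal (1 / 16 * sv1 B * sv2 B)
      ≤ ENNReal.ofReal (|(Matrix.of ![w 1 - w 0, w 2 - w 0]).det| / 4) := by
        rw [mul_assoc, sv1_mul_sv2, hdet, abs_div, abs_mul,
          abs_of_nonneg (hnorm.trans' (norm_nonneg _)), abs_of_pos (four_pos : (0 : ℝ) < 4)]
        gcongr
        linarith [mul_le_mul_of_nonneg_left hnorm (abs_nonneg B.det)]
    _ ≤ volume (convexHull ℝ {w 0, w 1, w 2}) :=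
        ofReal_abs_det_div_four_le_volume_convexHull _ _ _
    _ = μH[2] (planeCoord '' (projV '' (matApply B '' T0set))) := by
        rw [planeCoord_image_projV_image_T0set, hμ]
    _ ≤ μH[2] (projV '' (matApply B '' T0set)) := by
        simpa using lipschitzWith_planeCoord.hausdorffMeasure_image_le zero_le_two _

end
end

section
/- Let 0 < p < 1/2. For every n ≥ 1 and every pair of distinct words u ≠ w in {1,2,3}ⁿ, the sets proj(G_u(W°)) and proj(G_w(W°)) are disjoint, where for a word w = (j₁,…,jₙ) the map G_w is the composition G_{j₁} ∘ ⋯ ∘ G_{jₙ} and W° is the interior of W. -/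
open Matrix MeasureTheory Filter
open scoped ENNReal

noncomputable section

/-! Let `O = {x : 0 < xₖ, x₀ + x₁ + x₂ < 1}`, which contains `W°`. Each `G_i` maps `O` into
itself, raising the `i`-th coordinate above `p` and pushing the other two below `p`; hence for
`i ≠ j` no point of `G_i(O)` is coordinatewise below a point of `G_j(O)`. Conversely, for
`0 < p < 1/2` the maps `G_i` reflect the coordinatewise order, so coordinatewise comparability
of `G_u x` and `G_w y` descends through the common prefix of `u` and `w` to the first letter
where they differ, which is impossible. Two points with the same projection onto `V` differ by a
multiple of `(1,1,1)`, so they are comparable. -/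

lemma Gmap_apply (p : ℝ) (i : Fin 3) (x : E3) (k : Fin 3) :
    Gmap p i x k =
      if k = i then (1 - p) * x i + p * (2 - (x 0 + x 1 + x 2)) else p * x k := by
  have hC : matApply (Cmat p i) x k = (Cmat p i).mulVec x k := rfl
  simp only [Gmap, PiLp.add_apply, hC, PiLp.smul_apply, eVec, EuclideanSpace.single,
    PiLp.single_apply]
  fin_cases i <;> fin_cases k <;>
    simp [Cmat, Matrix.mulVec, dotProduct, Fin.sum_univ_three] <;> ring

lemma convexHull_subset_halfSpace {E : Type*} [AddCommGroup E] [Module ℝ E] {s : Set E}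
    (f : E →ₗ[ℝ] ℝ) {c : ℝ} (hs : ∀ x ∈ s, f x ≤ c) : convexHull ℝ s ⊆ {x | f x ≤ c} :=
  convexHull_min hs (convex_halfSpace_le f.isLinear c)

lemma interior_subset_of_subset_halfSpace {E : Type*} [NormedAddCommGroup E] [NormedSpace ℝ E]
    [CompleteSpace E] {s : Set E} (f : E →L[ℝ] ℝ) (hf : f ≠ 0) {c : ℝ}
    (hs : s ⊆ {x | f x ≤ c}) : interior s ⊆ {x | f x < c} := by
  have hsurj : Function.Surjective f :=
    LinearMap.surjective_of_ne_zero (f := f.toLinearMap) (by exact_mod_cast hf)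
  calc interior s ⊆ interior (f ⁻¹' Set.Iic c) := interior_mono hs
    _ = f ⁻¹' Set.Iio c := by rw [f.interior_preimage hsurj, interior_Iic]

def openSimplex : Set E3 := {x | (∀ k, 0 < x k) ∧ x 0 + x 1 + x 2 < 1}

lemma interior_Wset_subset_halfSpace (f : E3 →L[ℝ] ℝ) (hf : f ≠ 0) {c : ℝ} (h0 : 0 ≤ c)
    (hv : ∀ i, f (eVec i) ≤ c) : interior Wset ⊆ {x | f x < c} := by
  refine interior_subset_of_subset_halfSpace f hf (convexHull_subset_halfSpace f.toLinearMap ?_)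
  simp only [Set.mem_insert_iff, Set.mem_singleton_iff, forall_eq_or_imp, forall_eq]
  exact ⟨by simpa using h0, hv 0, hv 1, hv 2⟩

lemma interior_Wset_subset : interior Wset ⊆ openSimplex := by
  intro x hx
  refine ⟨fun k => ?_, ?_⟩
  · have := interior_Wset_subset_halfSpace (-EuclideanSpace.proj k)
      (DFunLike.ne_iff.2 ⟨eVec k, by simp [eVec]⟩) le_rfl
      (fun i => by simp [eVec, PiLp.single_apply]; positivity) hx
    simpa using this
  · let f : E3 →L[ℝ] ℝ := ∑ k, EuclideanSpace.proj k
    have := interior_Wset_subset_halfSpace f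
      (DFunLike.ne_iff.2 ⟨eVec 0, by simp [f, eVec]⟩) zero_le_one
      (fun i => by simp [f, eVec]) hx
    simpa [f, Fin.sum_univ_three] using this

lemma lt_one_of_mem_openSimplex {x : E3} (hx : x ∈ openSimplex) (k : Fin 3) : x k < 1 := by
  obtain ⟨hpos, hsum⟩ := hx
  have := hpos 0; have := hpos 1; have := hpos 2
  fin_cases k <;> simp <;> linarith

section Dynamics

variable {p : ℝ} {i : Fin 3} {x y : E3}

lemma lt_Gmap_self (hp0 : 0 < p) (hp1 : p < 1) (hx : x ∈ openSimplex) : p < Gmap p i x i := by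
  rw [Gmap_apply, if_pos rfl]
  nlinarith [hx.1 i, hx.2]

lemma Gmap_lt_of_ne (hp0 : 0 < p) {k : Fin 3} (hk : k ≠ i) (hx : x ∈ openSimplex) :
    Gmap p i x k < p := by
  rw [Gmap_apply, if_neg hk]
  nlinarith [lt_one_of_mem_openSimplex hx k]

lemma Gmap_mem_openSimplex (hp0 : 0 < p) (hp1 : p < 1 / 2) (hx : x ∈ openSimplex) :
    Gmap p i x ∈ openSimplex := by
  refine ⟨fun k => ?_, ?_⟩
  · by_cases hk : k = i
    · subst hk; linarith [lt_Gmap_self hp0 (by linarith) hx (i := k)]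
    · rw [Gmap_apply, if_neg hk]; exact mul_pos hp0 (hx.1 k)
  · have hsum : Gmap p i x 0 + Gmap p i x 1 + Gmap p i x 2 = (1 - 2 * p) * x i + 2 * p := by
      simp only [Gmap_apply]; fin_cases i <;> simp <;> ring
    rw [hsum]
    nlinarith [lt_one_of_mem_openSimplex hx i]

lemma le_of_Gmap_le (hp0 : 0 < p) (hp1 : p < 1 / 2) (h : ∀ k, Gmap p i x k ≤ Gmap p i y k) :
    ∀ k, x k ≤ y k := by
  have hoff : ∀ k, k ≠ i → x k ≤ y k := fun k hk => by
    have := h k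
    rw [Gmap_apply, Gmap_apply, if_neg hk, if_neg hk] at this
    exact le_of_mul_le_mul_left this hp0
  intro k
  by_cases hk : k = i
  · subst hk
    have := h k
    rw [Gmap_apply, Gmap_apply, if_pos rfl, if_pos rfl] at this
    have hrest : x 0 + x 1 + x 2 - x k ≤ y 0 + y 1 + y 2 - y k := by
      obtain rfl | rfl | rfl : k = 0 ∨ k = 1 ∨ k = 2 := by fin_cases k <;> simp
      · linarith [hoff 1 (by decide), hoff 2 (by decide)]
      · linarith [hoff 0 (by decide), hoff 2 (by decide)]
      · linarith [hoff 0 (by decide), hoff 1 (by decide)]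
    have hdiag : (1 - 2 * p) * (x k - y k) ≤ 0 := by
      nlinarith [mul_le_mul_of_nonneg_left hrest hp0.le]
    nlinarith
  · exact hoff k hk

lemma not_Gmap_le_Gmap (hp0 : 0 < p) (hp1 : p < 1) {j : Fin 3} (hij : i ≠ j)
    (hx : x ∈ openSimplex) (hy : y ∈ openSimplex) : ¬ ∀ k, Gmap p i x k ≤ Gmap p j y k :=
  fun h => (lt_Gmap_self hp0 hp1 hx).not_ge ((h i).trans (Gmap_lt_of_ne hp0 hij hy).le)

end Dynamics

def Glist (p : ℝ) (l : List (Fin 3)) : E3 → E3 := (l.map (Gmap p)).foldr (· ∘ ·) id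

lemma Glist_cons (p : ℝ) (i : Fin 3) (l : List (Fin 3)) (x : E3) :
    Glist p (i :: l) x = Gmap p i (Glist p l x) := rfl

lemma Gword_eq_Glist (p : ℝ) {n : ℕ} (w : Fin n → Fin 3) : Gword p w = Glist p (List.ofFn w) :=
  rfl

lemma Glist_mem_openSimplex {p : ℝ} (hp0 : 0 < p) (hp1 : p < 1 / 2) (l : List (Fin 3))
    {x : E3} (hx : x ∈ openSimplex) : Glist p l x ∈ openSimplex := by
  induction l with
  | nil => exact hx
  | cons i l ih => exact Gmap_mem_openSimplex hp0 hp1 ih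

theorem not_Glist_le_Glist {p : ℝ} (hp0 : 0 < p) (hp1 : p < 1 / 2) {l₁ l₂ : List (Fin 3)}
    (hlen : l₁.length = l₂.length) (hne : l₁ ≠ l₂) {x y : E3} (hx : x ∈ openSimplex)
    (hy : y ∈ openSimplex) : ¬ ∀ k, Glist p l₁ x k ≤ Glist p l₂ y k := by
  induction l₁ generalizing l₂ with
  | nil => cases l₂ with
    | nil => exact absurd rfl hne
    | cons => simp at hlen
  | cons i t ih => cases l₂ with
    | nil => simp at hlen
    | cons j s =>
      simp only [Glist_cons]
      by_cases hij : i = j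
      · subst hij
        exact fun h => ih (by simpa using hlen) (by simpa using hne) (le_of_Gmap_le hp0 hp1 h)
      · exact not_Gmap_le_Gmap hp0 (by linarith) hij (Glist_mem_openSimplex hp0 hp1 t hx)
          (Glist_mem_openSimplex hp0 hp1 s hy)

lemma onesVec_apply (k : Fin 3) : onesVec k = 1 := by
  fin_cases k <;> rfl

lemma le_or_ge_of_projV_eq {x y : E3} (h : projV x = projV y) :
    (∀ k, x k ≤ y k) ∨ (∀ k, y k ≤ x k) := by
  have hdiff : ∀ k, x k - y k = (x 0 + x 1 + x 2 - (y 0 + y 1 + y 2)) / 3 := fun k => by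
    have hk := congrArg (· k) h
    simp only [projV, PiLp.sub_apply, PiLp.smul_apply, smul_eq_mul, onesVec_apply,
      mul_one] at hk
    linarith
  rcases le_total (x 0 + x 1 + x 2) (y 0 + y 1 + y 2) with hs | hs
  · exact .inl fun k => by linarith [hdiff k]
  · exact .inr fun k => by linarith [hdiff k]

theorem proj_cylinders_disjoint_general (p : ℝ) (hp0 : 0 < p) (hp1 : p < 1/2)
    (n : ℕ) (u w : Fin n → Fin 3) (huw : u ≠ w) :
    Disjoint (projV '' (Gword p u '' interior Wset))
      (projV '' (Gword p w '' interior Wset)) := by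
  rw [Gword_eq_Glist, Gword_eq_Glist, Set.disjoint_left]
  rintro _ ⟨_, ⟨x, hx, rfl⟩, rfl⟩ ⟨_, ⟨y, hy, rfl⟩, hxy⟩
  have hlen : (List.ofFn u).length = (List.ofFn w).length := by simp
  have hne : List.ofFn u ≠ List.ofFn w := fun h => huw (List.ofFn_injective h)
  rcases le_or_ge_of_projV_eq hxy with h | h
  · exact not_Glist_le_Glist hp0 hp1 hlen.symm hne.symm (interior_Wset_subset hy)
      (interior_Wset_subset hx) h
  · exact not_Glist_le_Glist hp0 hp1 hlen hne (interior_Wset_subset hx)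
      (interior_Wset_subset hy) h

/-- Lemma (projections of the open cylinder sets are pairwise disjoint). -/
theorem proj_cylinders_disjoint (p : ℝ) (hp0 : 0 < p) (hp1 : p < 1/2)
    (n : ℕ) (hn : 1 ≤ n) (u w : Fin n → Fin 3) (huw : u ≠ w) :
    Disjoint (projV '' (Gword p u '' interior Wset))
      (projV '' (Gword p w '' interior Wset)) :=
  proj_cylinders_disjoint_general p hp0 hp1 n u w huw
end
end

section
/- There exists a constant C > 0 such that for every invertible 3×3 real matrix B all of whose inverse's entries are nonnegative, there exists i ∈ {2,3} with ‖proj(B(e_i − e₁))‖ ≥ C · α₁(B). -/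
/-!
Put `A = B⁻¹ ≥ 0` and let `w = Aᵀ𝟙` be its vector of column sums, so that `w ≥ 0` and
`wᵀB = 𝟙ᵀ`. Hence `w` is orthogonal to every edge image `B(eᵢ - e₁) = proj(B(eᵢ - e₁)) + tᵢ𝟙`,
and since a nonnegative weighted average of numbers within `d` of `tᵢ` cannot vanish unless
`|tᵢ| ≤ d`, the column differences of `B` are bounded by twice the longer projected edge `d`.
The same averaging argument, applied to the vanishing product of row `k` of `B` with a column
`j ≠ k` of `A`, bounds the first column of `B` by `2d`. So every entry of `B`, and hence `‖B‖`,
is `O(d)`.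
-/

open Matrix MeasureTheory Filter
open scoped ENNReal

noncomputable section

lemma abs_le_of_sum_mul_eq_zero {ι : Type*} [Fintype ι] {w x : ι → ℝ} {t d : ℝ}
    (hw : ∀ i, 0 ≤ w i) (hw_pos : 0 < ∑ i, w i) (hsum : ∑ i, w i * x i = 0)
    (hx : ∀ i, |x i - t| ≤ d) : |t| ≤ d := by
  have key : |t| * ∑ i, w i ≤ d * ∑ i, w i :=
    calc |t| * ∑ i, w i = |∑ i, w i * (t - x i)| := by
          rw [← abs_of_pos hw_pos, ← abs_mul]
          simp only [mul_sub, Finset.sum_sub_distrib, hsum, sub_zero, ← Finset.mul_sum, mul_comm]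
      _ ≤ ∑ i, w i * |x i - t| := by
          refine (Finset.abs_sum_le_sum_abs _ _).trans (Finset.sum_le_sum fun i _ => ?_)
          rw [abs_mul, abs_of_nonneg (hw i), abs_sub_comm]
      _ ≤ d * ∑ i, w i := by
          rw [Finset.mul_sum]
          exact Finset.sum_le_sum fun i _ => by nlinarith [hw i, hx i]
  exact le_of_mul_le_mul_right key hw_pos

section NonnegInverse

variable {n : Type*} [Fintype n] [DecidableEq n] {B : Matrix n n ℝ}

lemma sum_inv_apply_pos (hB : IsUnit B) (hinv : ∀ i j, 0 ≤ B⁻¹ i j) (j : n) :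
    0 < ∑ k, B⁻¹ k j := by
  refine (Finset.sum_nonneg fun k _ => hinv k j).lt_of_ne fun h0 => ?_
  have hzero := (Finset.sum_eq_zero_iff_of_nonneg fun k _ => hinv k j).1 h0.symm
  have hjj := congrFun (congrFun (B.mul_nonsing_inv ((B.isUnit_iff_isUnit_det).mp hB)) j) j
  simp [Matrix.mul_apply, hzero] at hjj

lemma sum_sum_inv_apply_mul_apply_eq_one (hB : IsUnit B) (i : n) :
    ∑ l, (∑ k, B⁻¹ k l) * B l i = 1 := by
  have h k := congrFun (congrFun (B.nonsing_inv_mul ((B.isUnit_iff_isUnit_det).mp hB)) k) i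
  simp only [Finset.sum_mul]
  rw [Finset.sum_comm]
  simp [← Matrix.mul_apply, h, Matrix.one_apply]

lemma abs_apply_le_of_abs_sub_col_sub_le [Nontrivial n] (hB : IsUnit B)
    (hinv : ∀ i j, 0 ≤ B⁻¹ i j) (i₀ : n) (t : n → ℝ) {d : ℝ}
    (h : ∀ k i, |B k i - B k i₀ - t i| ≤ d) (k l : n) : |B k l| ≤ 4 * d := by
  have hdiff : ∀ k i, |B k i - B k i₀| ≤ 2 * d := by
    intro k i
    have ht : |t i| ≤ d := by
      refine abs_le_of_sum_mul_eq_zero (fun l => Finset.sum_nonneg fun k _ => hinv k l)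
        (Finset.sum_pos (fun l _ => sum_inv_apply_pos hB hinv l) Finset.univ_nonempty) ?_
        (h · i)
      simp only [mul_sub, Finset.sum_sub_distrib, sum_sum_inv_apply_mul_apply_eq_one hB, sub_self]
    linarith [abs_sub_abs_le_abs_sub (B k i - B k i₀) (t i), h k i]
  obtain ⟨j, hjk⟩ := exists_ne k
  have hk₀ : |B k i₀| ≤ 2 * d := by
    refine abs_le_of_sum_mul_eq_zero (hinv · j) (sum_inv_apply_pos hB hinv j) ?_ (hdiff k)
    have := congrFun (congrFun (B.mul_nonsing_inv ((B.isUnit_iff_isUnit_det).mp hB)) k) j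
    simpa [Matrix.mul_apply, Matrix.one_apply, hjk.symm, mul_comm] using this
  linarith [abs_sub_abs_le_abs_sub (B k l) (B k i₀), hdiff k l]

end NonnegInverse

lemma OrthonormalBasis.norm_le_sum_norm_repr {ι 𝕜 E : Type*} [Fintype ι] [RCLike 𝕜]
    [NormedAddCommGroup E] [InnerProductSpace 𝕜 E] (b : OrthonormalBasis ι 𝕜 E) (x : E) :
    ‖x‖ ≤ ∑ i, ‖b.repr x i‖ := by
  conv_lhs => rw [← b.sum_repr x]
  refine (norm_sum_le _ _).trans_eq (Finset.sum_congr rfl fun i _ => ?_)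
  rw [norm_smul, b.orthonormal.1 i, mul_one]

lemma norm_toEuclideanCLM_le_of_abs_apply_le {n : Type*} [Fintype n] [DecidableEq n]
    (B : Matrix n n ℝ) {c : ℝ} (hc : 0 ≤ c) (h : ∀ k l, |B k l| ≤ c) :
    ‖Matrix.toEuclideanCLM (𝕜 := ℝ) B‖ ≤ Fintype.card n ^ 2 * c := by
  refine ContinuousLinearMap.opNorm_le_bound _ (by positivity) fun x => ?_
  have hcoord : ∀ k, |Matrix.toEuclideanCLM (𝕜 := ℝ) B x k| ≤ Fintype.card n * c * ‖x‖ := by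
    intro k
    calc |Matrix.toEuclideanCLM (𝕜 := ℝ) B x k| = |∑ l, B k l * x l| := rfl
      _ ≤ ∑ l, |B k l| * |x l| := (Finset.abs_sum_le_sum_abs _ _).trans_eq (by simp only [abs_mul])
      _ ≤ ∑ _l : n, c * ‖x‖ :=
          Finset.sum_le_sum fun l _ =>
            mul_le_mul (h k l) (PiLp.norm_apply_le x l) (abs_nonneg _) hc
      _ = Fintype.card n * c * ‖x‖ := by simp [mul_assoc]
  calc ‖Matrix.toEuclideanCLM (𝕜 := ℝ) B x‖
      ≤ ∑ k, |Matrix.toEuclideanCLM (𝕜 := ℝ) B x k| := by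
        simpa only [EuclideanSpace.basisFun_repr, Real.norm_eq_abs]
          using (EuclideanSpace.basisFun n ℝ).norm_le_sum_norm_repr _
    _ ≤ ∑ _k : n, Fintype.card n * c * ‖x‖ := Finset.sum_le_sum fun k _ => hcoord k
    _ = Fintype.card n ^ 2 * c * ‖x‖ := by simp; ring

lemma projV_matApply_eVec_sub_apply (B : Mat3) (i j k : Fin 3) :
    projV (matApply B (eVec i - eVec j)) k = B k i - B k j - (∑ l, (B l i - B l j)) / 3 := by
  have hcol : ∀ l, matApply B (eVec i - eVec j) l = B l i - B l j := fun l => by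
    simp [matApply, eVec]
  fin_cases k <;> simp [projV, onesVec, hcol, Fin.sum_univ_three] <;> ring

/-- Lemma (a projected edge image is comparable to `α₁`). -/
theorem proj_edge_length_lower_bound :
    ∃ C : ℝ, 0 < C ∧ ∀ B : Mat3, IsUnit B → (∀ i j, 0 ≤ B⁻¹ i j) →
      ∃ i : Fin 3, (i = 1 ∨ i = 2) ∧
        C * sv1 B ≤ ‖projV (matApply B (eVec i - eVec 0))‖ := by
  refine ⟨1 / 36, by norm_num, fun B hB hinv => ?_⟩
  set edge : Fin 3 → ℝ := fun j => ‖projV (matApply B (eVec j - eVec 0))‖ with hedge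
  obtain ⟨i, hi, hmax⟩ : ∃ i : Fin 3, (i = 1 ∨ i = 2) ∧ ∀ j, edge j ≤ edge i := by
    have h0 : edge 0 = 0 := by simp [hedge, projV, matApply]
    rcases le_total (edge 1) (edge 2) with h | h
    · refine ⟨2, Or.inr rfl, fun j => ?_⟩
      fin_cases j; exacts [h0.le.trans (norm_nonneg _), h, le_rfl]
    · refine ⟨1, Or.inl rfl, fun j => ?_⟩
      fin_cases j; exacts [h0.le.trans (norm_nonneg _), le_rfl, h]
  have hcols : ∀ k j, |B k j - B k 0 - (∑ l, (B l j - B l 0)) / 3| ≤ edge i := fun k j => by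
    rw [← projV_matApply_eVec_sub_apply, ← Real.norm_eq_abs]
    exact (PiLp.norm_apply_le _ k).trans (hmax j)
  have hentries := abs_apply_le_of_abs_sub_col_sub_le hB hinv 0 _ hcols
  have hsv1 : sv1 B ≤ 3 ^ 2 * (4 * edge i) :=
    norm_toEuclideanCLM_le_of_abs_apply_le B (by positivity) hentries
  exact ⟨i, hi, by linarith⟩
end
end

section
/- Let 0 < p < 1/2. Then the family {C₁, C₂, C₃} is proximal: there exist n ≥ 1, a word w ∈ {1,2,3}ⁿ, and a real number λ > 0 such that λ is a root of the characteristic polynomial of C_w of multiplicity one and every other complex root μ of the characteristic polynomial satisfies |μ| < λ. -/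
open Matrix MeasureTheory Filter
open scoped ENNReal

noncomputable section

/-!
The word `(1, 2)` already works. `C₁ C₂` is block upper triangular, with a `2 × 2` block of
trace `2ap + p²` and determinant `a²p²` (where `a = 1 - 2p`) and the eigenvalue `p²`. The
discriminant of the block is `p² (4ap + p²) > 0`, so with `s = √(4ap + p²)` its eigenvalues are
`p (2a + p ± s) / 2`; since `p < s < 2a + p`, both are positive and the larger one strictly exceeds
both the smaller one and `p²`.
-/

open Polynomial

theorem Matrix.charpoly_fin_three_blockTriangular {R : Type*} [CommRing R] (x y t z w u v : R) :
    (!![x, y, t; z, w, u; 0, 0, v] : Matrix (Fin 3) (Fin 3) R).charpoly =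
      (X ^ 2 - C (x + w) * X + C (x * w - y * z)) * (X - C v) := by
  rw [charpoly, det_fin_three]
  simp
  ring

theorem Polynomial.simple_dominant_root_of_eq_prod_X_sub_C {q : ℝ[X]} {l : ℝ} {s : Multiset ℝ}
    (hq : q = ((l ::ₘ s).map fun r => X - C r).prod) (hs : ∀ r ∈ s, |r| < l) :
    (q.map (algebraMap ℝ ℂ)).rootMultiplicity (l : ℂ) = 1 ∧
      ∀ μ : ℂ, (q.map (algebraMap ℝ ℂ)).IsRoot μ → μ ≠ l → ‖μ‖ < l := by
  classical
  have hmap : q.map (algebraMap ℝ ℂ) = (((l ::ₘ s).map (↑)).map fun r : ℂ => X - C r).prod := by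
    simp [hq, Polynomial.map_multiset_prod, Multiset.map_map]
  have hroots : (q.map (algebraMap ℝ ℂ)).roots = (l ::ₘ s).map (↑) := by
    rw [hmap, roots_multiset_prod_X_sub_C]
  have hne : q.map (algebraMap ℝ ℂ) ≠ 0 := by
    rw [hmap]; exact (monic_multiset_prod_of_monic _ _ fun r _ => monic_X_sub_C r).ne_zero
  refine ⟨?_, fun μ hμ hμl => ?_⟩
  · rw [← count_roots, hroots, Multiset.map_cons, Multiset.count_cons_self,
      Multiset.count_eq_zero.mpr]
    simp only [Multiset.mem_map, Complex.ofReal_inj, not_exists, not_and]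
    rintro r hr rfl
    exact lt_irrefl _ ((le_abs_self r).trans_lt (hs r hr))
  · obtain ⟨r, hr, rfl⟩ : ∃ r ∈ l ::ₘ s, (r : ℂ) = μ := by
      rw [← Multiset.mem_map, ← hroots]; exact (mem_roots hne).mpr hμ
    rcases Multiset.mem_cons.mp hr with rfl | hr
    · exact absurd rfl hμl
    · rw [Complex.norm_real, Real.norm_eq_abs]; exact hs r hr

theorem Cword_zero_one (p : ℝ) :
    Cword p ![0, 1] =
      !![(1 - 2 * p) * p + p ^ 2, -((1 - 2 * p) * p), 0;
        -p ^ 2, (1 - 2 * p) * p, -p ^ 2;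
        0, 0, p ^ 2] := by
  simp only [Cword, List.ofFn_succ, List.ofFn_zero, List.map_cons, List.map_nil, List.prod_cons,
    List.prod_nil, mul_one]
  ext i j
  fin_cases i <;> fin_cases j <;> simp [Cmat, Matrix.mul_apply, Fin.sum_univ_three] <;> ring

/-- Lemma (the family `{C₁, C₂, C₃}` is proximal). -/
theorem Cmat_proximal (p : ℝ) (hp0 : 0 < p) (hp1 : p < 1/2) :
    ∃ (n : ℕ) (w : Fin (n+1) → Fin 3) (lam : ℝ), 0 < lam ∧
      (((Cword p w).charpoly.map (algebraMap ℝ ℂ)).rootMultiplicity (lam : ℂ) = 1) ∧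
      (∀ μ : ℂ, ((Cword p w).charpoly.map (algebraMap ℝ ℂ)).IsRoot μ → μ ≠ (lam : ℂ) →
        ‖μ‖ < lam) := by
  set a := 1 - 2 * p
  have ha0 : 0 < a := by linarith
  obtain ⟨s, hs0, hs2⟩ : ∃ s : ℝ, 0 < s ∧ s ^ 2 = 4 * a * p + p ^ 2 :=
    ⟨_, Real.sqrt_pos.2 (by positivity), Real.sq_sqrt (by positivity)⟩
  have hps : p < s := by nlinarith
  have hsa : s < 2 * a + p := by nlinarith
  set l := p * (2 * a + p + s) / 2 with hl
  set m := p * (2 * a + p - s) / 2 with hm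
  have hm0 : 0 < m := by rw [hm]; nlinarith
  have hml : m < l := by rw [hl, hm]; nlinarith
  have hpl : p ^ 2 < l := by rw [hl]; nlinarith
  have hchar : (Cword p ![0, 1]).charpoly = ((l ::ₘ {m, p ^ 2}).map fun r => X - C r).prod := by
    have htrace : a * p + p ^ 2 + a * p = l + m := by ring
    have hdet : (a * p + p ^ 2) * (a * p) - -(a * p) * -p ^ 2 = l * m := by
      linear_combination (p ^ 2 / 4) * hs2
    rw [Cword_zero_one, Matrix.charpoly_fin_three_blockTriangular, htrace, hdet]
    simp
    ring
  refine ⟨1, ![0, 1], l, hm0.trans hml, simple_dominant_root_of_eq_prod_X_sub_C hchar ?_⟩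
  simp [abs_of_pos hm0, hml, hpl]
end
end

section
/- Let 1/3 ≤ p < 1/2. Then the matrix C₁C₂ has three distinct real eigenvalues, namely p², λ₋ = p(2 − 3p − √((4−7p)p))/2 and λ₊ = p(2 − 3p + √((4−7p)p))/2, and they satisfy 0 < λ₋ < p² < λ₊; equivalently, the characteristic polynomial of C₁C₂ factors as (X − p²)(X − λ₋)(X − λ₊). -/
open Matrix MeasureTheory Filter
open scoped ENNReal

noncomputable section

/-!
`C₁C₂` is block upper triangular, so its characteristic polynomial is `X - p²` times that of its
upper-left `2 × 2` block, whose trace is `2p - 3p²`, determinant `p²(1 - 2p)²` and discriminant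
`p³(4 - 7p)`. The ordering of the eigenvalues comes down to `(2 - 3p)² - (4 - 7p)p = 4(1 - 2p)² > 0`
and `(4 - 7p)p - (2 - 5p)² = 4(4p - 1)(1 - 2p) > 0`.
-/

open Polynomial

lemma Matrix.charpoly_fin_three_of_bottom_left_eq_zero {R : Type*} [CommRing R]
    (A : Matrix (Fin 3) (Fin 3) R) (h₀ : A 2 0 = 0) (h₁ : A 2 1 = 0) :
    A.charpoly =
      (X ^ 2 - C (A 0 0 + A 1 1) * X + C (A 0 0 * A 1 1 - A 0 1 * A 1 0)) * (X - C (A 2 2)) := by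
  simp only [charpoly, det_fin_three, charmatrix_apply, h₀, h₁]
  simp only [Fin.isValue, Fin.reduceEq, diagonal_apply_eq, diagonal_apply_ne,
    ne_eq, not_false_eq_true, map_zero, map_sub, map_add, map_mul, sub_zero]
  ring

lemma Polynomial.X_sq_sub_C_mul_X_add_C_eq_mul {K : Type*} [Field K] [NeZero (2 : K)]
    {b c s : K} (hs : s * s = b ^ 2 - 4 * c) :
    X ^ 2 - C b * X + C c = (X - C ((b - s) / 2)) * (X - C ((b + s) / 2)) := by
  have hb : b = (b - s) / 2 + (b + s) / 2 := by field_simp; ring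
  have hc : c = (b - s) / 2 * ((b + s) / 2) := by
    field_simp
    linear_combination hs
  conv_lhs => rw [hb, hc]
  simp only [map_add, map_mul]
  ring

lemma Cmat_zero_mul_Cmat_one (p : ℝ) :
    Cmat p 0 * Cmat p 1 =
      !![p - p ^ 2, -((1 - 2 * p) * p), 0; -p ^ 2, (1 - 2 * p) * p, -p ^ 2; 0, 0, p ^ 2] := by
  ext i j
  fin_cases i <;> fin_cases j <;> simp [Cmat, Matrix.mul_apply, Fin.sum_univ_three] <;> ring

lemma charpoly_Cmat_zero_mul_Cmat_one (p : ℝ) :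
    (Cmat p 0 * Cmat p 1).charpoly =
      (X ^ 2 - C (2 * p - 3 * p ^ 2) * X + C (p ^ 2 * (1 - 2 * p) ^ 2)) * (X - C (p ^ 2)) := by
  rw [Matrix.charpoly_fin_three_of_bottom_left_eq_zero _ (by simp [Cmat_zero_mul_Cmat_one])
    (by simp [Cmat_zero_mul_Cmat_one])]
  simp only [Cmat_zero_mul_Cmat_one, of_apply, cons_val', cons_val_zero, cons_val_one,
    cons_val_two, empty_val', cons_val_fin_one, head_cons, head_fin_const, tail_cons]
  congr 4
  · exact congrArg C (by ring)
  · ring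

def eigvalMinus (p : ℝ) : ℝ := p * (2 - 3 * p - √((4 - 7 * p) * p)) / 2

def eigvalPlus (p : ℝ) : ℝ := p * (2 - 3 * p + √((4 - 7 * p) * p)) / 2

lemma charpoly_Cmat_zero_mul_Cmat_one_eq_prod {p : ℝ} (hp₀ : 0 ≤ p) (hp : p ≤ 4 / 7) :
    (Cmat p 0 * Cmat p 1).charpoly =
      (X - C (p ^ 2)) * (X - C (eigvalMinus p)) * (X - C (eigvalPlus p)) := by
  have hdisc : p * √((4 - 7 * p) * p) * (p * √((4 - 7 * p) * p)) =
      (2 * p - 3 * p ^ 2) ^ 2 - 4 * (p ^ 2 * (1 - 2 * p) ^ 2) := by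
    have hrad : 0 ≤ (4 - 7 * p) * p := mul_nonneg (by linarith) hp₀
    linear_combination p ^ 2 * Real.mul_self_sqrt hrad
  have hminus : (2 * p - 3 * p ^ 2 - p * √((4 - 7 * p) * p)) / 2 = eigvalMinus p := by
    rw [eigvalMinus]; ring
  have hplus : (2 * p - 3 * p ^ 2 + p * √((4 - 7 * p) * p)) / 2 = eigvalPlus p := by
    rw [eigvalPlus]; ring
  rw [charpoly_Cmat_zero_mul_Cmat_one, Polynomial.X_sq_sub_C_mul_X_add_C_eq_mul hdisc, hminus,
    hplus]
  ring

lemma sqrt_lt_two_sub {p : ℝ} (hp₀ : 0 < p) (hp : p < 1 / 2) :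
    √((4 - 7 * p) * p) < 2 - 3 * p := by
  rw [Real.sqrt_lt' (by linarith)]
  nlinarith

lemma abs_two_sub_lt_sqrt {p : ℝ} (hp₀ : 1 / 4 < p) (hp : p < 1 / 2) :
    |2 - 5 * p| < √((4 - 7 * p) * p) := by
  rw [Real.lt_sqrt (abs_nonneg _), sq_abs]
  nlinarith

lemma eigvalMinus_pos {p : ℝ} (hp₀ : 0 < p) (hp : p < 1 / 2) : 0 < eigvalMinus p :=
  div_pos (mul_pos hp₀ (sub_pos.2 (sqrt_lt_two_sub hp₀ hp))) two_pos

lemma eigvalMinus_lt_sq {p : ℝ} (hp₀ : 1 / 4 < p) (hp : p < 1 / 2) : eigvalMinus p < p ^ 2 := by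
  have hs := (le_abs_self _).trans_lt (abs_two_sub_lt_sqrt hp₀ hp)
  unfold eigvalMinus
  nlinarith

lemma sq_lt_eigvalPlus {p : ℝ} (hp₀ : 1 / 4 < p) (hp : p < 1 / 2) : p ^ 2 < eigvalPlus p := by
  have hs := (neg_le_abs _).trans_lt (abs_two_sub_lt_sqrt hp₀ hp)
  unfold eigvalPlus
  nlinarith

/-- Lemma (explicit eigenvalues of `C₁C₂` for `1/3 ≤ p < 1/2`). -/
theorem eigenvalues_C1C2 (p : ℝ) (hp13 : 1/3 ≤ p) (hp12 : p < 1/2) :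
    0 < p * (2 - 3*p - Real.sqrt ((4 - 7*p) * p)) / 2 ∧
    p * (2 - 3*p - Real.sqrt ((4 - 7*p) * p)) / 2 < p^2 ∧
    p^2 < p * (2 - 3*p + Real.sqrt ((4 - 7*p) * p)) / 2 ∧
    (Cmat p 0 * Cmat p 1).charpoly =
      (Polynomial.X - Polynomial.C (p^2)) *
      (Polynomial.X - Polynomial.C (p * (2 - 3*p - Real.sqrt ((4 - 7*p) * p)) / 2)) *
      (Polynomial.X - Polynomial.C (p * (2 - 3*p + Real.sqrt ((4 - 7*p) * p)) / 2)) := by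
  have hp₀ : 1 / 4 < p := by linarith
  exact ⟨eigvalMinus_pos (by linarith) hp12, eigvalMinus_lt_sq hp₀ hp12,
    sq_lt_eigvalPlus hp₀ hp12, charpoly_Cmat_zero_mul_Cmat_one_eq_prod (by linarith) (by linarith)⟩
end
end

section
/- Let p ∈ (0, 1/2) with p ≠ 1/5. Then the family {C₁, C₂, C₃} is strongly irreducible: there do not exist finitely many linear subspaces V₁, …, Vₙ of ℝ³ with 0 < dim Vₖ < 3 for each k, such that for every i ∈ {1,2,3} the matrix C_i maps the union V₁ ∪ ⋯ ∪ Vₙ into V₁ ∪ ⋯ ∪ Vₙ. -/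
open Matrix MeasureTheory Filter
open scoped ENNReal

noncomputable section

/-- Standard basis vector (auxiliary, plain `Fin 3 → ℝ` version). -/
def evAux (i : Fin 3) : Fin 3 → ℝ := fun j => if j = i then 1 else 0

/-- Auxiliary linear functional `u_i · x`. -/
def ddAux (p : ℝ) (i : Fin 3) (x : Fin 3 → ℝ) : ℝ :=
  (1 - 2*p) * x i - p * (x 0 + x 1 + x 2)

lemma Cmat_mulVec_eq (p : ℝ) (i : Fin 3) (x : Fin 3 → ℝ) :
    (Cmat p i).mulVec x = p • x + ddAux p i x • evAux i := by
  funext j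
  fin_cases i <;> fin_cases j <;>
    simp [Cmat, Matrix.mulVec, dotProduct, Fin.sum_univ_three, ddAux, evAux] <;> ring

lemma ddAux_add_smul (p : ℝ) (i : Fin 3) (x : Fin 3 → ℝ) (t : ℝ) :
    ddAux p i (x + t • evAux i) = ddAux p i x + t * (1 - 3*p) := by
  fin_cases i <;> simp [ddAux, evAux] <;> ring

lemma reachP {n : ℕ} (p : ℝ) (hp0 : 0 < p) (hp1 : p < 1/2)
    (Vs : Fin n → Submodule ℝ (Fin 3 → ℝ))
    (hinv : ∀ i : Fin 3, ∀ x : Fin 3 → ℝ, (∃ k, x ∈ Vs k) → ∃ k, (Cmat p i).mulVec x ∈ Vs k)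
    (x : Fin 3 → ℝ) (i : Fin 3) (hx : ∃ k, x ∈ Vs k) (hd : ddAux p i x ≠ 0) :
    ∃ k, x ∈ Vs k ∧ evAux i ∈ Vs k := by
  set r : ℝ := (1 - 2*p) / p with hr
  have hrpos : 0 < r := div_pos (by linarith) hp0
  set T : ℕ → ℝ := fun m => (ddAux p i x / p) * ∑ k ∈ Finset.range m, r ^ k with hT
  -- each iterate lies in the union
  have main : ∀ m : ℕ, ∃ k, x + T m • evAux i ∈ Vs k := by
    intro m
    induction m with
    | zero => simpa [hT] using hx
    | succ m ih =>
      obtain ⟨k, hk⟩ := ih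
      obtain ⟨k', hk'⟩ := hinv i _ ⟨k, hk⟩
      refine ⟨k', ?_⟩
      have heq : x + T (m+1) • evAux i = p⁻¹ • (Cmat p i).mulVec (x + T m • evAux i) := by
        rw [Cmat_mulVec_eq, ddAux_add_smul]
        funext j
        have hTsucc : T (m + 1) = ddAux p i x / p + r * T m := by
          simp only [hT, geom_sum_succ]
          ring
        simp only [Pi.add_apply, Pi.smul_apply, smul_eq_mul, hTsucc, hr]
        field_simp
        ring
      rw [heq]
      exact Submodule.smul_mem _ _ hk'
  -- T is injective
  have hTinj : Function.Injective T := by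
    have hmono : StrictMono (fun m => ∑ k ∈ Finset.range m, r ^ k) := by
      apply strictMono_nat_of_lt_succ
      intro m
      rw [Finset.sum_range_succ]
      nlinarith [pow_pos hrpos m]
    intro a b hab
    have : (∑ k ∈ Finset.range a, r ^ k) = ∑ k ∈ Finset.range b, r ^ k := by
      have hne : ddAux p i x / p ≠ 0 := div_ne_zero hd (ne_of_gt hp0)
      exact mul_left_cancel₀ hne hab
    exact hmono.injective this
  choose f hf using main
  obtain ⟨a, b, hab, hfab⟩ := Finite.exists_ne_map_eq_of_infinite f
  have h1 := hf a
  have h2 := hf b; rw [← hfab] at h2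
  have hdiff : (T a - T b) • evAux i ∈ Vs (f a) := by
    have := Submodule.sub_mem _ h1 h2
    convert this using 1
    module
  have hTne : T a - T b ≠ 0 := sub_ne_zero_of_ne (fun h => hab (hTinj h))
  have hev : evAux i ∈ Vs (f a) := by
    have := Submodule.smul_mem _ (T a - T b)⁻¹ hdiff
    rwa [smul_smul, inv_mul_cancel₀ hTne, one_smul] at this
  refine ⟨f a, ?_, hev⟩
  have := Submodule.sub_mem _ h1 (Submodule.smul_mem _ (T a) hev)
  simpa using this

lemma third_index (i j : Fin 3) (hij : j ≠ i) :
    ∃ m, m ≠ i ∧ m ≠ j ∧ ∀ a : Fin 3, a = i ∨ a = j ∨ a = m := by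
  revert hij; revert i j; decide


/-- Lemma (the family `{C₁, C₂, C₃}` is strongly irreducible for `p ≠ 1/5`). -/
theorem Cmat_strongly_irreducible (p : ℝ) (hp0 : 0 < p) (hp1 : p < 1/2) (hp5 : p ≠ 1/5) :
    ¬ ∃ (n : ℕ) (Vs : Fin n → Submodule ℝ (Fin 3 → ℝ)), 0 < n ∧
      (∀ k, 0 < Module.finrank ℝ (Vs k) ∧ Module.finrank ℝ (Vs k) < 3) ∧
      (∀ i : Fin 3, ∀ x : Fin 3 → ℝ, (∃ k, x ∈ Vs k) → ∃ k, (Cmat p i).mulVec x ∈ Vs k) := by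
  rintro ⟨n, Vs, hn, hdim, hinv⟩
  have h2p : (1:ℝ) - 2*p ≠ 0 := by intro h; linarith
  have h5p : (1:ℝ) - 5*p ≠ 0 := fun h => hp5 (by linarith)
  -- a nonzero vector in the union
  let k0 : Fin n := ⟨0, hn⟩
  have hnt : Nontrivial (Vs k0) := Module.nontrivial_of_finrank_pos (hdim k0).1
  obtain ⟨x0v, hx0v⟩ := exists_ne (0 : Vs k0)
  have hx0 : (x0v : Fin 3 → ℝ) ≠ 0 := fun h => hx0v (Subtype.ext h)
  set x0 : Fin 3 → ℝ := (x0v : Fin 3 → ℝ) with hx0def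
  -- some i with ddAux p i x0 ≠ 0
  have hddne : ∃ i, ddAux p i x0 ≠ 0 := by
    by_contra h
    push_neg at h
    apply hx0
    have h0 := h 0; have h1 := h 1; have h2 := h 2
    simp only [ddAux] at h0 h1 h2
    have hsum : (1 - 5*p) * (x0 0 + x0 1 + x0 2) = 0 := by linear_combination h0 + h1 + h2
    have hs : x0 0 + x0 1 + x0 2 = 0 := by
      rcases mul_eq_zero.mp hsum with h' | h'
      · exact absurd h' h5p
      · exact h'
    have e0 : x0 0 = 0 := by
      have h' : (1 - 2*p) * x0 0 = 0 := by linear_combination h0 + p * hs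
      rcases mul_eq_zero.mp h' with h'' | h''
      · exact absurd h'' h2p
      · exact h''
    have e1 : x0 1 = 0 := by
      have h' : (1 - 2*p) * x0 1 = 0 := by linear_combination h1 + p * hs
      rcases mul_eq_zero.mp h' with h'' | h''
      · exact absurd h'' h2p
      · exact h''
    have e2 : x0 2 = 0 := by
      have h' : (1 - 2*p) * x0 2 = 0 := by linear_combination h2 + p * hs
      rcases mul_eq_zero.mp h' with h'' | h''
      · exact absurd h'' h2p
      · exact h''
    funext j
    fin_cases j
    · exact e0
    · exact e1
    · exact e2
  obtain ⟨i, hi⟩ := hddne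
  obtain ⟨k1, _, hei⟩ := reachP p hp0 hp1 Vs hinv x0 i ⟨k0, x0v.2⟩ hi
  -- pick j ≠ i
  obtain ⟨j, hj⟩ : ∃ j : Fin 3, j ≠ i := by
    fin_cases i
    · exact ⟨1, by decide⟩
    · exact ⟨0, by decide⟩
    · exact ⟨0, by decide⟩
  have hdj : ddAux p j (evAux i) ≠ 0 := by
    have : ddAux p j (evAux i) = -p := by
      fin_cases i <;> fin_cases j <;> simp_all [ddAux, evAux]
    rw [this]; exact neg_ne_zero.mpr (ne_of_gt hp0)
  obtain ⟨l, heil, hejl⟩ := reachP p hp0 hp1 Vs hinv (evAux i) j ⟨k1, hei⟩ hdj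
  obtain ⟨m, hmi, hmj, hcover⟩ := third_index i j hj
  -- the family z a = evAux i + a • evAux j
  have hz : ∀ a : ℕ, ∃ k, (evAux i + (a:ℝ) • evAux j) ∈ Vs k ∧ evAux m ∈ Vs k := by
    intro a
    have hmem : evAux i + (a:ℝ) • evAux j ∈ Vs l :=
      Submodule.add_mem _ heil (Submodule.smul_mem _ _ hejl)
    have hdm : ddAux p m (evAux i + (a:ℝ) • evAux j) ≠ 0 := by
      have hlin : ddAux p m (evAux i + (a:ℝ) • evAux j) = -(p * (1 + a)) := by
        have h1 : ddAux p m (evAux i + (a:ℝ) • evAux j)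
            = ddAux p m (evAux i) + (a:ℝ) * ddAux p m (evAux j) := by
          simp [ddAux]; ring
        have h2 : ddAux p m (evAux i) = -p := by
          fin_cases i <;> fin_cases m <;> simp_all [ddAux, evAux]
        have h3 : ddAux p m (evAux j) = -p := by
          fin_cases j <;> fin_cases m <;> simp_all [ddAux, evAux]
        rw [h1, h2, h3]; ring
      rw [hlin]
      have : (0:ℝ) < p * (1 + a) := by positivity
      exact neg_ne_zero.mpr (ne_of_gt this)
    exact reachP p hp0 hp1 Vs hinv _ m ⟨l, hmem⟩ hdm
  choose g hg1 hg2 using hz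
  obtain ⟨a, b, hab, hgab⟩ := Finite.exists_ne_map_eq_of_infinite g
  set V := Vs (g a) with hV
  have hza : evAux i + (a:ℝ) • evAux j ∈ V := hg1 a
  have hzb : evAux i + (b:ℝ) • evAux j ∈ V := by rw [hV, hgab]; exact hg1 b
  have hem : evAux m ∈ V := hg2 a
  have habr : (a:ℝ) - (b:ℝ) ≠ 0 := by
    rw [sub_ne_zero]; exact_mod_cast fun h => hab (Nat.cast_injective h)
  have hdiff : ((a:ℝ) - (b:ℝ)) • evAux j ∈ V := by
    have := Submodule.sub_mem _ hza hzb
    convert this using 1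
    module
  have hej : evAux j ∈ V := by
    have := Submodule.smul_mem _ ((a:ℝ) - (b:ℝ))⁻¹ hdiff
    rwa [smul_smul, inv_mul_cancel₀ habr, one_smul] at this
  have heiV : evAux i ∈ V := by
    have := Submodule.sub_mem _ hza (Submodule.smul_mem _ (a:ℝ) hej)
    simpa using this
  have hall : ∀ c : Fin 3, evAux c ∈ V := by
    intro c
    rcases hcover c with h | h | h <;> subst h <;> assumption
  have htop : V = ⊤ := by
    rw [eq_top_iff]
    intro v _
    have hv : v = v 0 • evAux 0 + v 1 • evAux 1 + v 2 • evAux 2 := by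
      funext c; fin_cases c <;> simp [evAux]
    rw [hv]
    exact Submodule.add_mem _ (Submodule.add_mem _
      (Submodule.smul_mem _ _ (hall 0)) (Submodule.smul_mem _ _ (hall 1)))
      (Submodule.smul_mem _ _ (hall 2))
  have hfin : Module.finrank ℝ V = 3 := by
    rw [htop, finrank_top]
    simp [Module.finrank_fin_fun]
  have hlt := (hdim (g a)).2
  rw [← hV] at hlt
  omega
end
end

section
/- Let p = 1/5. Define the linear maps L_i : V → V by L_i(w) = proj(C_i w) for i = 1,2,3 (these are well defined since (1,1,1) is a common eigenvector of C₁, C₂, C₃ with eigenvalue 1/5 when p = 1/5). Then the family {L₁, L₂, L₃} is strongly irreducible on V: there is no nonempty finite collection of one-dimensional linear subspaces W₁, …, W_m of V such that every L_i maps the union W₁ ∪ ⋯ ∪ W_m into W₁ ∪ ⋯ ∪ W_m. -/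
open Matrix MeasureTheory Filter
open scoped ENNReal

noncomputable section

/-!
On `V` the map `L₁ = proj ∘ C₁` has the eigenvalues `3/5` and `1/5`, of different moduli. A
vector off both eigenlines therefore has iterates on infinitely many different lines, so every
line of an invariant finite union of lines is an eigenline of `L₁`, and likewise of `L₂`. But
the two eigenlines of `L₁` and the two of `L₂` are four distinct lines.
-/

theorem apply_iterate_eq_pow_mul {α K : Type*} [Monoid K] {s : Set α} {f : α → α}
    (hf : Set.MapsTo f s s) {φ : α → K} {a : K} (hφ : ∀ y ∈ s, φ (f y) = a * φ y) {x : α}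
    (hx : x ∈ s) (n : ℕ) : φ (f^[n] x) = a ^ n * φ x := by
  induction n with
  | zero => simp
  | succ n ih => rw [Function.iterate_succ_apply', hφ _ (hf.iterate n hx), ih, pow_succ', mul_assoc]

/-- Pigeonhole: two iterates `fⁱ x`, `fʲ x` (`i < j`) lie on one line, `fʲ x = c • fⁱ x`, and
applying `φ` and `ψ` gives `c = a ^ (j - i) = b ^ (j - i)`. -/
theorem eq_zero_or_eq_zero_of_mapsTo_iUnion_lines {K M ι : Type*} [Field K] [AddCommGroup M]
    [Module K M] [Finite ι] {W : ι → Submodule K M} (hW : ∀ k, Module.finrank K (W k) = 1)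
    {f : M → M} (hf : Set.MapsTo f (⋃ k, (W k : Set M)) (⋃ k, (W k : Set M)))
    {φ ψ : M →ₗ[K] K} {a b : K} (ha : a ≠ 0) (hb : b ≠ 0) (hab : ∀ d ≠ 0, a ^ d ≠ b ^ d)
    (hφ : ∀ y ∈ ⋃ k, (W k : Set M), φ (f y) = a * φ y)
    (hψ : ∀ y ∈ ⋃ k, (W k : Set M), ψ (f y) = b * ψ y)
    {x : M} (hx : x ∈ ⋃ k, (W k : Set M)) : φ x = 0 ∨ ψ x = 0 := by
  by_contra! ⟨hφx, hψx⟩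
  have hφn := apply_iterate_eq_pow_mul hf hφ hx
  have hψn := apply_iterate_eq_pow_mul hf hψ hx
  choose line hline using fun n => Set.mem_iUnion.mp (hf.iterate n hx)
  have line_injective : ∀ i j, i < j → line i ≠ line j := by
    intro i j hij hk
    have hne : f^[i] x ≠ 0 := fun h => by
      simpa [ha, hφx] using (hφn i).symm.trans (congrArg φ h)
    obtain ⟨c, hc⟩ := (finrank_eq_one_iff_of_nonzero' (⟨_, hline i⟩ : W (line i))
      (by simpa using hne)).mp (hW _) ⟨_, hk ▸ hline j⟩
    have hc : c • f^[i] x = f^[j] x := congrArg Subtype.val hc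
    obtain ⟨d, rfl⟩ := Nat.exists_eq_add_of_lt hij
    have ratio : ∀ (χ : M →ₗ[K] K) (e : K), χ x ≠ 0 → e ≠ 0 →
        (∀ n, χ (f^[n] x) = e ^ n * χ x) → c = e ^ (d + 1) := by
      intro χ e hχ he hχn
      have := congrArg χ hc
      rw [map_smul, hχn, hχn, smul_eq_mul, pow_add, pow_add] at this
      exact mul_right_cancel₀ (pow_ne_zero i he) (mul_right_cancel₀ hχ (by linear_combination this))
    exact hab (d + 1) d.succ_ne_zero ((ratio φ a hφx ha hφn).symm.trans (ratio ψ b hψx hb hψn))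
  obtain ⟨i, j, hij, hk⟩ := Finite.exists_ne_map_eq_of_infinite line
  rcases hij.lt_or_gt with h | h
  exacts [line_injective i j h hk, line_injective j i h hk.symm]

def Lmap (i : Fin 3) (x : E3) : E3 := projV (matApply (Cmat (1/5) i) x)

theorem Lmap_apply_self {x : E3} (hx : x 0 + x 1 + x 2 = 0) (i : Fin 3) :
    Lmap i x i = 3 / 5 * x i := by
  fin_cases i <;>
    simp [Lmap, projV, onesVec, matApply, Cmat, Matrix.mulVec, dotProduct, Fin.sum_univ_three] <;>
    linarith

theorem Lmap_apply_of_ne (x : E3) {i j : Fin 3} (hij : j ≠ i) :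
    Lmap i x j = (x j - x i) / 5 := by
  fin_cases i <;> fin_cases j <;>
    simp [Lmap, projV, onesVec, matApply, Cmat, Matrix.mulVec, dotProduct, Fin.sum_univ_three]
      at hij ⊢ <;>
    ring

theorem coord_eq_zero_or_of_mapsTo_Lmap {ι : Type*} [Finite ι] {W : ι → Submodule ℝ E3}
    (hW : ∀ k, Module.finrank ℝ (W k) = 1) (hV : ∀ k, ∀ y ∈ W k, y 0 + y 1 + y 2 = 0)
    {i j : Fin 3} (hij : j ≠ i)
    (hL : Set.MapsTo (Lmap i) (⋃ k, (W k : Set E3)) (⋃ k, (W k : Set E3)))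
    {x : E3} (hx : x ∈ ⋃ k, (W k : Set E3)) : x i = 0 ∨ x i + 2 * x j = 0 := by
  have hV' : ∀ y ∈ ⋃ k, (W k : Set E3), y 0 + y 1 + y 2 = 0 := fun y hy => by
    obtain ⟨k, hk⟩ := Set.mem_iUnion.mp hy
    exact hV k y hk
  have h := eq_zero_or_eq_zero_of_mapsTo_iUnion_lines hW hL
    (φ := EuclideanSpace.projₗ i) (ψ := EuclideanSpace.projₗ i + (2 : ℝ) • EuclideanSpace.projₗ j)
    (a := 3 / 5) (b := 1 / 5) (by norm_num) (by norm_num)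
    (fun d hd => (pow_lt_pow_left₀ (by norm_num) (by norm_num) hd).ne')
    (fun y hy => by simpa using Lmap_apply_self (hV' y hy) i)
    (fun y hy => by
      simp only [LinearMap.add_apply, LinearMap.smul_apply, PiLp.projₗ_apply, smul_eq_mul,
        Lmap_apply_self (hV' y hy), Lmap_apply_of_ne y hij]
      ring) hx
  simpa only [LinearMap.add_apply, PiLp.projₗ_apply, LinearMap.smul_apply, smul_eq_mul] using h

/-- Lemma (for `p = 1/5` the projected family is strongly irreducible on the plane `V`). -/
theorem proj_family_strongly_irreducible :
    ¬ ∃ (m : ℕ) (Ws : Fin m → Submodule ℝ E3), 0 < m ∧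
      (∀ k, (∀ x ∈ Ws k, x 0 + x 1 + x 2 = 0) ∧ Module.finrank ℝ (Ws k) = 1) ∧
      (∀ i : Fin 3, ∀ x : E3, (∃ k, x ∈ Ws k) →
        ∃ k, projV (matApply (Cmat (1/5) i) x) ∈ Ws k) := by
  rintro ⟨m, Ws, hm, hW, hinv⟩
  have hL : ∀ i, Set.MapsTo (Lmap i) (⋃ k, (Ws k : Set E3)) (⋃ k, (Ws k : Set E3)) :=
    fun i y hy => Set.mem_iUnion.mpr (hinv i y (Set.mem_iUnion.mp hy))
  obtain ⟨x, hx, hx_ne⟩ := Submodule.exists_mem_ne_zero_of_ne_bot (p := Ws ⟨0, hm⟩)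
    (Submodule.one_le_finrank_iff.mp (hW _).2.ge)
  have hxS : x ∈ ⋃ k, (Ws k : Set E3) := Set.mem_iUnion.mpr ⟨_, hx⟩
  have hL0 := coord_eq_zero_or_of_mapsTo_Lmap (fun k => (hW k).2) (fun k => (hW k).1)
    (by decide : (2 : Fin 3) ≠ 0) (hL 0) hxS
  have hL1 := coord_eq_zero_or_of_mapsTo_Lmap (fun k => (hW k).2) (fun k => (hW k).1)
    (by decide : (2 : Fin 3) ≠ 1) (hL 1) hxS
  have hsum := (hW _).1 x hx
  apply hx_ne
  ext j
  fin_cases j <;> rcases hL0 with h0 | h0 <;> rcases hL1 with h1 | h1 <;> simp <;> linarith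
end
end
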